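/- arXiv:1804.06867 — 3 statements merged into one kernel-verified Lean document; each statement's English description precedes it below -/
import Mathlib

section
/- Let (a,b,c) be a deterministic menu with a ≤ b ≤ c and c > a+b for two independent items with values v1 ~ D1, v2 ~ D2. If Pr[v1 ∈ [a, c−b)] · a ≥ Pr[v1 ≥ c−b] · (c − (a+b)), then the additive menu (a,b,a+b) yields expected revenue at least that of (a,b,c). -/
open MeasureTheory

/-- Payment made by a utility-maximizing additive buyer with values `(v1, v2)` facing the
deterministic menu charging `a` for item 1, `b` for item 2, `c` for the pair;
ties are broken in favor of the higher payment. -/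
noncomputable def pay (a b c v1 v2 : ℝ) : ℝ :=
  let u1 := v1 - a
  let u2 := v2 - b
  let u12 := v1 + v2 - c
  let m := max (max 0 u1) (max u2 u12)
  max (if u1 = m then a else 0) (max (if u2 = m then b else 0) (if u12 = m then c else 0))

/-- Expected revenue of the menu `(a, b, c)` when values are drawn from `μ`. -/
noncomputable def rev (μ : Measure (ℝ × ℝ)) (a b c : ℝ) : ℝ :=
  ∫ v, pay a b c v.1 v.2 ∂μ

lemma pay_def (a b c v1 v2 : ℝ) :
    pay a b c v1 v2 =
      max (if v1 - a = max (max 0 (v1 - a)) (max (v2 - b) (v1 + v2 - c)) then a else 0)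
        (max (if v2 - b = max (max 0 (v1 - a)) (max (v2 - b) (v1 + v2 - c)) then b else 0)
          (if v1 + v2 - c = max (max 0 (v1 - a)) (max (v2 - b) (v1 + v2 - c)) then c else 0)) :=
  rfl

lemma pay_upper {a b c : ℝ} (ha : 0 ≤ a) (hab : a ≤ b) (hs : a + b < c) (x y : ℝ) :
    pay a b c x y ≤
      ((if a ≤ x then a else 0) + (if b ≤ y then b else 0))
        + (if c - b ≤ x then if c - a ≤ y then c - (a + b) else 0 else 0)
        - (if a ≤ x then if x < c - b then if b ≤ y then a else 0 else 0 else 0) := by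
  rw [pay_def]
  set M := max (max 0 (x - a)) (max (y - b) (x + y - c)) with hM
  have h0 : (0:ℝ) ≤ M := le_trans (le_max_left _ _) (le_max_left _ _)
  have h1 : x - a ≤ M := le_trans (le_max_right _ _) (le_max_left _ _)
  have h2 : y - b ≤ M := le_trans (le_max_left _ _) (le_max_right _ _)
  have h3 : x + y - c ≤ M := le_trans (le_max_right _ _) (le_max_right _ _)
  refine max_le ?_ (max_le ?_ ?_) <;> split_ifs <;> linarith

lemma pay_lower {a b : ℝ} (ha : 0 ≤ a) (hab : a ≤ b) (x y : ℝ) :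
    (if a ≤ x then a else 0) + (if b ≤ y then b else 0) ≤ pay a b (a + b) x y := by
  rw [pay_def]
  set M := max (max 0 (x - a)) (max (y - b) (x + y - (a + b))) with hM
  rcases le_or_gt a x with hx | hx <;> rcases le_or_gt b y with hy | hy
  · have hMe : M = x + y - (a + b) := by
      rw [hM]; simp only [max_def]; split_ifs <;> linarith
    rw [if_pos hx, if_pos hy]
    calc a + b = (if x + y - (a + b) = M then a + b else 0) := (if_pos hMe.symm).symm
      _ ≤ _ := le_trans (le_max_right _ _) (le_max_right _ _)
  · have hMe : M = x - a := by
      rw [hM]; simp only [max_def]; split_ifs <;> linarith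
    rw [if_pos hx, if_neg (not_le.mpr hy)]
    calc a + 0 = (if x - a = M then a else 0) := by rw [if_pos hMe.symm]; ring
      _ ≤ _ := le_max_left _ _
  · have hMe : M = y - b := by
      rw [hM]; simp only [max_def]; split_ifs <;> linarith
    rw [if_neg (not_le.mpr hx), if_pos hy]
    calc 0 + b = (if y - b = M then b else 0) := by rw [if_pos hMe.symm]; ring
      _ ≤ _ := le_trans (le_max_left _ _) (le_max_right _ _)
  · rw [if_neg (not_le.mpr hx), if_neg (not_le.mpr hy)]
    have h0 : (0:ℝ) ≤ (if x - a = M then a else 0) := by split_ifs <;> linarith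
    calc (0:ℝ) + 0 = 0 := by ring
      _ ≤ _ := le_trans h0 (le_max_left _ _)

lemma pay_nonneg {a b c : ℝ} (ha : 0 ≤ a) (hb : 0 ≤ b) (hc : 0 ≤ c) (x y : ℝ) :
    0 ≤ pay a b c x y := by
  rw [pay_def]
  refine le_trans ?_ (le_max_left _ _)
  split_ifs <;> linarith

lemma pay_le {a b c : ℝ} (hac : a ≤ c) (hbc : b ≤ c) (hc : 0 ≤ c) (x y : ℝ) :
    pay a b c x y ≤ c := by
  rw [pay_def]
  refine max_le ?_ (max_le ?_ ?_) <;> split_ifs <;> linarith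

lemma pay_measurable (a b c : ℝ) : Measurable fun v : ℝ × ℝ => pay a b c v.1 v.2 := by
  simp only [pay_def]
  have m1 : Measurable fun v : ℝ × ℝ => v.1 - a := measurable_fst.sub measurable_const
  have m2 : Measurable fun v : ℝ × ℝ => v.2 - b := measurable_snd.sub measurable_const
  have m3 : Measurable fun v : ℝ × ℝ => v.1 + v.2 - c :=
    (measurable_fst.add measurable_snd).sub measurable_const
  have mM : Measurable fun v : ℝ × ℝ =>
      max (max 0 (v.1 - a)) (max (v.2 - b) (v.1 + v.2 - c)) :=
    (measurable_const.max m1).max (m2.max m3)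
  exact (Measurable.ite (measurableSet_eq_fun m1 mM) measurable_const measurable_const).max
    ((Measurable.ite (measurableSet_eq_fun m2 mM) measurable_const measurable_const).max
      (Measurable.ite (measurableSet_eq_fun m3 mM) measurable_const measurable_const))

lemma pay_integrable {a b c : ℝ} (ha : 0 ≤ a) (hab : a ≤ b) (hbc : b ≤ c)
    (μ : Measure (ℝ × ℝ)) [IsProbabilityMeasure μ] :
    Integrable (fun v : ℝ × ℝ => pay a b c v.1 v.2) μ := by
  have hb : 0 ≤ b := ha.trans hab
  have hc : 0 ≤ c := hb.trans hbc
  refine (integrable_const c).mono' (pay_measurable a b c).aestronglyMeasurable ?_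
  refine Filter.Eventually.of_forall fun v => ?_
  rw [Real.norm_eq_abs, abs_le]
  exact ⟨by linarith [pay_nonneg ha hb hc v.1 v.2], pay_le (hab.trans hbc) hbc hc v.1 v.2⟩

theorem stmt1 (μ1 μ2 : Measure ℝ) [IsProbabilityMeasure μ1] [IsProbabilityMeasure μ2]
    (h1 : μ1 (Set.Iio 0) = 0) (h2 : μ2 (Set.Iio 0) = 0)
    (a b c : ℝ) (ha : 0 ≤ a) (hab : a ≤ b) (hbc : b ≤ c) (hsup : a + b < c)
    (hcond : (μ1 (Set.Ici (c - b))).toReal * (c - (a + b)) ≤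
      (μ1 (Set.Ico a (c - b))).toReal * a) :
    rev (μ1.prod μ2) a b c ≤ rev (μ1.prod μ2) a b (a + b) := by
  classical
  have hb : 0 ≤ b := ha.trans hab
  set μ := μ1.prod μ2 with hμ
  set δ := c - (a + b) with hδ
  set Sb : Set (ℝ × ℝ) := Set.Ici (c - b) ×ˢ Set.Ici (c - a) with hSbdef
  set S1 : Set (ℝ × ℝ) := Set.Ico a (c - b) ×ˢ Set.Ici b with hS1def
  have hSb : MeasurableSet Sb := measurableSet_Ici.prod measurableSet_Ici
  have hS1 : MeasurableSet S1 := measurableSet_Ico.prod measurableSet_Ici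
  have hIc : Integrable (fun v : ℝ × ℝ => pay a b c v.1 v.2) μ := pay_integrable ha hab hbc μ
  have hIadd : Integrable (fun v : ℝ × ℝ => pay a b (a + b) v.1 v.2) μ :=
    pay_integrable ha hab (by linarith) μ
  have hIb : Integrable (Sb.indicator fun _ => δ) μ := (integrable_const δ).indicator hSb
  have hI1 : Integrable (S1.indicator fun _ => a) μ := (integrable_const a).indicator hS1
  have key : ∀ v : ℝ × ℝ, pay a b c v.1 v.2 ≤
      pay a b (a + b) v.1 v.2 + (Sb.indicator (fun _ => δ) v - S1.indicator (fun _ => a) v) := by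
    intro v
    have e1 : Sb.indicator (fun _ => δ) v =
        (if c - b ≤ v.1 then if c - a ≤ v.2 then c - (a + b) else 0 else 0) := by
      rw [Set.indicator_apply]
      simp only [hSbdef, Set.mem_prod, Set.mem_Ici, hδ, ite_and]
    have e2 : S1.indicator (fun _ => a) v =
        (if a ≤ v.1 then if v.1 < c - b then if b ≤ v.2 then a else 0 else 0 else 0) := by
      rw [Set.indicator_apply]
      simp only [hS1def, Set.mem_prod, Set.mem_Ico, Set.mem_Ici, ite_and]
    have hup := pay_upper ha hab hsup v.1 v.2
    have hlo := pay_lower ha hab v.1 v.2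
    rw [e1, e2]
    linarith
  have hIsub : Integrable
      (fun v : ℝ × ℝ => Sb.indicator (fun _ => δ) v - S1.indicator (fun _ => a) v) μ :=
    hIb.sub hI1
  have step1 : rev μ a b c ≤ rev μ a b (a + b) +
      ∫ v, (Sb.indicator (fun _ => δ) v - S1.indicator (fun _ => a) v) ∂μ := by
    rw [rev, rev, ← integral_add hIadd hIsub]
    exact integral_mono hIc (hIadd.add hIsub) key
  have comp : ∫ v, (Sb.indicator (fun _ => δ) v - S1.indicator (fun _ => a) v) ∂μ =
      (μ1 (Set.Ici (c - b))).toReal * (μ2 (Set.Ici (c - a))).toReal * δ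
        - (μ1 (Set.Ico a (c - b))).toReal * (μ2 (Set.Ici b)).toReal * a := by
    rw [integral_sub hIb hI1, integral_indicator_const _ hSb, integral_indicator_const _ hS1,
      hSbdef, hS1def, hμ, measureReal_def, measureReal_def, Measure.prod_prod, Measure.prod_prod, ENNReal.toReal_mul,
      ENNReal.toReal_mul, smul_eq_mul, smul_eq_mul]
  have hBD : (μ2 (Set.Ici (c - a))).toReal ≤ (μ2 (Set.Ici b)).toReal :=
    ENNReal.toReal_mono (measure_ne_top _ _)
      (measure_mono (Set.Ici_subset_Ici.mpr (by linarith)))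
  have hineq : (μ1 (Set.Ici (c - b))).toReal * (μ2 (Set.Ici (c - a))).toReal * δ
      ≤ (μ1 (Set.Ico a (c - b))).toReal * (μ2 (Set.Ici b)).toReal * a := by
    have hB0 : (0:ℝ) ≤ (μ2 (Set.Ici (c - a))).toReal := ENNReal.toReal_nonneg
    have hCa0 : (0:ℝ) ≤ (μ1 (Set.Ico a (c - b))).toReal * a :=
      mul_nonneg ENNReal.toReal_nonneg ha
    have t1 := mul_le_mul_of_nonneg_right hcond hB0
    have t2 := mul_le_mul_of_nonneg_left hBD hCa0
    nlinarith [t1, t2]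
  linarith [step1, comp, hineq]
end

section
/- For any r1, r2 > 0 and two independent items with values drawn from equal revenue distributions ER_{r1} and ER_{r2}, the supremum revenue over deterministic menus equals the supremum revenue from selling only the grand bundle. More precisely, for any menu (a,b,c) with a ≤ b ≤ c, the menu (c,b,c) obtains at least as much expected revenue. -/
/-!
Condition on the value `y ≥ 0` of item 2 and compare the menus `(a, b, c)` and `(c, b, c)`.
If `y ≥ c - a`, the bundle weakly beats item 1 at either price, so both menus collect the same
payment. If `b ≤ y < c - a`, the menu `(a, b, c)` collects at most `b`, while `(c, b, c)` collects
`b` or `c`. Otherwise the buyer facing `(a, b, c)` only ever buys item 1, which earns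
`a * Pr[v₁ ≥ a]`, and the buyer facing `(c, b, c)` only ever buys the bundle, which earns
`c * Pr[v₁ ≥ c - y] ≥ (c - y) * Pr[v₁ ≥ c - y]`. For an equal revenue distribution the revenue curve
`p * Pr[v₁ ≥ p] = min p r₁` is nondecreasing and `a < c - y`, so the second is larger.
Applying this to each item in turn, after swapping the items, raises any menu to the pure bundle
`(c, c, c)`.
-/

open MeasureTheory

open Set

section Payment

variable {a b c x y : ℝ}

lemma pay_comm (a b c x y : ℝ) : pay a b c x y = pay b a c y x := by
  simp only [pay]
  rw [add_comm y x, max_max_max_comm, max_left_comm (if y - b = _ then b else 0)]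

lemma pay_eq_zero_of_lt (h1 : x - a < 0) (h2 : y - b < 0) (h3 : x + y - c < 0) :
    pay a b c x y = 0 := by
  have hM : max (max 0 (x - a)) (max (y - b) (x + y - c)) = 0 := by
    simp [h1.le, h2.le, h3.le]
  simp only [pay, hM, if_neg h1.ne, if_neg h2.ne, if_neg h3.ne, max_self]

lemma pay_eq_left (ha : 0 ≤ a) (h0 : 0 ≤ x - a) (h2 : y - b < x - a) (h3 : x + y - c < x - a) :
    pay a b c x y = a := by
  have hM : max (max 0 (x - a)) (max (y - b) (x + y - c)) = x - a := by
    simp [h0, h2.le, h3.le]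
  simp only [pay, hM, if_neg h2.ne, if_neg h3.ne, if_true, max_self, max_eq_left ha]

lemma pay_eq_right (hb : 0 ≤ b) (h0 : 0 ≤ y - b) (h1 : x - a < y - b) (h3 : x + y - c < y - b) :
    pay a b c x y = b := by
  rw [pay_comm]
  exact pay_eq_left hb h0 h1 (by linarith)

lemma pay_eq_bundle (hc : 0 ≤ c) (hac : a ≤ c) (hbc : b ≤ c) (h0 : 0 ≤ x + y - c)
    (h1 : x - a ≤ x + y - c) (h2 : y - b ≤ x + y - c) : pay a b c x y = c := by
  have hM : max (max 0 (x - a)) (max (y - b) (x + y - c)) = x + y - c := by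
    simp [h0, h1, h2]
  simp only [pay, hM, if_true]
  refine le_antisymm (max_le ?_ (max_le ?_ le_rfl)) (le_max_of_le_right (le_max_right _ _))
  all_goals split_ifs <;> assumption

lemma pay_le_max_of_lt (ha : 0 ≤ a) (h : x + y - c < x - a) : pay a b c x y ≤ max a b := by
  have h3 : x + y - c ≠ max (max 0 (x - a)) (max (y - b) (x + y - c)) :=
    (h.trans_le (le_max_of_le_left (le_max_right _ _))).ne
  simp only [pay, if_neg h3]
  refine max_le ?_ (max_le ?_ (le_max_of_le_left ha))
  all_goals split_ifs <;> simp [ha]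

lemma abs_pay_le (a b c x y : ℝ) : |pay a b c x y| ≤ |a| + |b| + |c| := by
  unfold pay
  refine abs_max_le_max_abs_abs.trans (max_le ?_ (abs_max_le_max_abs_abs.trans (max_le ?_ ?_)))
  all_goals split_ifs <;> linarith [abs_nonneg a, abs_nonneg b, abs_nonneg c, abs_zero (α := ℝ)]

lemma measurable_pay (a b c : ℝ) : Measurable fun z : ℝ × ℝ => pay a b c z.1 z.2 := by
  let M : ℝ × ℝ → ℝ := fun z => max (max 0 (z.1 - a)) (max (z.2 - b) (z.1 + z.2 - c))
  have hM : Measurable M := by fun_prop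
  have hopt {u : ℝ × ℝ → ℝ} (p : ℝ) (hu : Measurable u) :
      Measurable fun z => if u z = M z then p else 0 :=
    Measurable.ite (measurableSet_eq_fun hu hM) measurable_const measurable_const
  exact (hopt a (by fun_prop)).max ((hopt b (by fun_prop)).max (hopt c (by fun_prop)))

lemma pay_eq_pay_of_sub_le (ha : 0 ≤ a) (hab : a ≤ b) (hbc : b ≤ c) (hy : c - a ≤ y) :
    pay a b c x y = pay c b c x y := by
  by_cases hbundle : max 0 (y - b) ≤ x + y - c
  · have h0 := (le_max_left _ _).trans hbundle
    have h2 := (le_max_right _ _).trans hbundle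
    rw [pay_eq_bundle (by linarith) (by linarith) hbc h0 (by linarith) h2,
      pay_eq_bundle (by linarith) le_rfl hbc h0 (by linarith) h2]
  · rw [not_le, lt_max_iff] at hbundle
    by_cases hb : 0 ≤ y - b
    · have h3 : x + y - c < y - b := hbundle.elim (fun h => by linarith) id
      rw [pay_eq_right (by linarith) hb (by linarith) h3,
        pay_eq_right (by linarith) hb (by linarith) h3]
    · have h3 : x + y - c < 0 := hbundle.elim id (fun h => by linarith)
      rw [not_le] at hb
      rw [pay_eq_zero_of_lt (by linarith) hb h3, pay_eq_zero_of_lt (by linarith) hb h3]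

lemma pay_le_pay_of_le_of_lt (ha : 0 ≤ a) (hab : a ≤ b) (hbc : b ≤ c) (hby : b ≤ y)
    (hy : y < c - a) : pay a b c x y ≤ pay c b c x y := by
  calc pay a b c x y ≤ max a b := pay_le_max_of_lt ha (by linarith)
    _ = b := max_eq_right hab
    _ ≤ pay c b c x y := by
      by_cases h : y - b ≤ x + y - c
      · rw [pay_eq_bundle (by linarith) le_rfl hbc (by linarith) (by linarith) h]
        exact hbc
      · rw [pay_eq_right (by linarith) (by linarith) (by linarith) (by linarith)]

lemma pay_eq_indicator_left (ha : 0 ≤ a) (hyb : y < b) (hy : y < c - a) :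
    pay a b c x y = (Ici a).indicator (fun _ => a) x := by
  by_cases hx : a ≤ x
  · rw [pay_eq_left ha (by linarith) (by linarith) (by linarith),
      indicator_of_mem (mem_Ici.mpr hx)]
  · rw [pay_eq_zero_of_lt (by linarith) (by linarith) (by linarith),
      indicator_of_notMem (by simpa using hx)]

lemma pay_eq_indicator_bundle (hy0 : 0 ≤ y) (hyb : y < b) (hbc : b ≤ c) :
    pay c b c x y = (Ici (c - y)).indicator (fun _ => c) x := by
  by_cases hx : c - y ≤ x
  · rw [pay_eq_bundle (by linarith) le_rfl hbc (by linarith) (by linarith) (by linarith),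
      indicator_of_mem (mem_Ici.mpr hx)]
  · rw [pay_eq_zero_of_lt (by linarith) (by linarith) (by linarith),
      indicator_of_notMem (by simpa using hx)]

end Payment

section Revenue

variable {μ ν : Measure ℝ}

lemma integrable_pay (a b c : ℝ) (ρ : Measure (ℝ × ℝ)) [IsFiniteMeasure ρ] :
    Integrable (fun z : ℝ × ℝ => pay a b c z.1 z.2) ρ :=
  .of_bound (measurable_pay a b c).aestronglyMeasurable _ (ae_of_all _ fun _ => abs_pay_le ..)

lemma integrable_pay_left (a b c y : ℝ) [IsFiniteMeasure μ] :
    Integrable (fun x => pay a b c x y) μ :=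
  .of_bound
    ((measurable_pay a b c).comp (measurable_id.prodMk measurable_const)).aestronglyMeasurable _
    (ae_of_all _ fun _ => abs_pay_le ..)

lemma rev_prod_comm [SFinite μ] [SFinite ν] (a b c : ℝ) :
    rev (μ.prod ν) a b c = rev (ν.prod μ) b a c := by
  rw [rev, rev, ← integral_prod_swap]
  simp only [Prod.fst_swap, Prod.snd_swap, pay_comm a b c]

lemma integral_pay_le_integral_pay [IsFiniteMeasure μ]
    (hμ : MonotoneOn (fun p => p * μ.real (Ici p)) (Ici 0)) {a b c y : ℝ} (ha : 0 ≤ a)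
    (hab : a ≤ b) (hbc : b ≤ c) (hy0 : 0 ≤ y) :
    ∫ x, pay a b c x y ∂μ ≤ ∫ x, pay c b c x y ∂μ := by
  rcases le_or_gt (c - a) y with hay | hya
  · exact integral_mono (integrable_pay_left ..) (integrable_pay_left ..) fun _ =>
      (pay_eq_pay_of_sub_le ha hab hbc hay).le
  rcases le_or_gt b y with hby | hyb
  · exact integral_mono (integrable_pay_left ..) (integrable_pay_left ..) fun _ =>
      pay_le_pay_of_le_of_lt ha hab hbc hby hya
  simp only [pay_eq_indicator_left ha hyb hya, pay_eq_indicator_bundle hy0 hyb hbc,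
    integral_indicator_const _ measurableSet_Ici, smul_eq_mul]
  calc μ.real (Ici a) * a = a * μ.real (Ici a) := mul_comm ..
    _ ≤ (c - y) * μ.real (Ici (c - y)) := hμ ha (mem_Ici.mpr (by linarith)) (by linarith)
    _ ≤ μ.real (Ici (c - y)) * c := by
      rw [mul_comm _ c]
      exact mul_le_mul_of_nonneg_right (by linarith) measureReal_nonneg

lemma rev_le_rev_of_le [IsFiniteMeasure μ] [IsFiniteMeasure ν]
    (hμ : MonotoneOn (fun p => p * μ.real (Ici p)) (Ici 0)) (hν : ∀ᵐ y ∂ν, 0 ≤ y) {a b c : ℝ}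
    (ha : 0 ≤ a) (hab : a ≤ b) (hbc : b ≤ c) :
    rev (μ.prod ν) a b c ≤ rev (μ.prod ν) c b c := by
  rw [rev, rev, integral_prod_symm _ (integrable_pay ..), integral_prod_symm _ (integrable_pay ..)]
  refine integral_mono_ae (integrable_pay ..).integral_prod_right
    (integrable_pay ..).integral_prod_right ?_
  filter_upwards [hν] with y hy
  exact integral_pay_le_integral_pay hμ ha hab hbc hy

lemma rev_le_rev_bundle [IsFiniteMeasure μ] [IsFiniteMeasure ν]
    (hμ : MonotoneOn (fun p => p * μ.real (Ici p)) (Ici 0))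
    (hν : MonotoneOn (fun p => p * ν.real (Ici p)) (Ici 0))
    (hμ0 : ∀ᵐ x ∂μ, 0 ≤ x) (hν0 : ∀ᵐ y ∂ν, 0 ≤ y) {a b c : ℝ} (ha : 0 ≤ a) (hb : 0 ≤ b)
    (hc : max a b ≤ c) :
    rev (μ.prod ν) a b c ≤ rev (μ.prod ν) c c c := by
  obtain ⟨hac, hbc⟩ := max_le_iff.mp hc
  rcases le_total a b with hab | hba
  · calc rev (μ.prod ν) a b c ≤ rev (μ.prod ν) c b c := rev_le_rev_of_le hμ hν0 ha hab hbc
      _ = rev (ν.prod μ) b c c := rev_prod_comm ..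
      _ ≤ rev (ν.prod μ) c c c := rev_le_rev_of_le hν hμ0 hb hbc le_rfl
      _ = rev (μ.prod ν) c c c := (rev_prod_comm ..).symm
  · calc rev (μ.prod ν) a b c = rev (ν.prod μ) b a c := rev_prod_comm ..
      _ ≤ rev (ν.prod μ) c a c := rev_le_rev_of_le hν hμ0 hb hba hac
      _ = rev (μ.prod ν) a c c := (rev_prod_comm ..).symm
      _ ≤ rev (μ.prod ν) c c c := rev_le_rev_of_le hμ hν0 ha hac le_rfl

end Revenue

section EqualRevenue

variable {μ : Measure ℝ} {r : ℝ}

lemma monotoneOn_mul_measureReal_Ici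
    (hμ : ∀ p : ℝ, 0 < p → (μ (Ici p)).toReal = min 1 (r / p)) :
    MonotoneOn (fun p => p * μ.real (Ici p)) (Ici 0) := by
  have hcurve {p : ℝ} (hp : 0 < p) : p * μ.real (Ici p) = min p r := by
    rw [measureReal_def, hμ p hp, mul_min_of_nonneg _ _ hp.le, mul_one, mul_div_cancel₀ _ hp.ne']
  intro p hp q hq hpq
  rcases (mem_Ici.mp hp).eq_or_lt with rfl | hp
  · simp only [zero_mul]
    exact mul_nonneg hq measureReal_nonneg
  · simp only [hcurve hp, hcurve (hp.trans_le hpq)]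
    exact min_le_min_right r hpq

lemma ae_nonneg_of_measureReal_Ici [IsProbabilityMeasure μ] (hr : 0 < r)
    (hμ : ∀ p : ℝ, 0 < p → (μ (Ici p)).toReal = min 1 (r / p)) : ∀ᵐ x ∂μ, 0 ≤ x := by
  have hfull : μ (Ici r) = 1 := by
    rw [← ENNReal.toReal_eq_one_iff, hμ r hr, div_self hr.ne', min_self]
  have hae : ∀ᵐ x ∂μ, x ∈ Ici r :=
    (ae_mem_iff_measure_eq measurableSet_Ici.nullMeasurableSet).mpr (by rw [hfull, measure_univ])
  exact hae.mono fun x hx => hr.le.trans hx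

end EqualRevenue

theorem stmt4 (r1 r2 : ℝ) (hr1 : 0 < r1) (hr2 : 0 < r2)
    (μ1 μ2 : Measure ℝ) [IsProbabilityMeasure μ1] [IsProbabilityMeasure μ2]
    (hER1 : ∀ p : ℝ, 0 < p → (μ1 (Set.Ici p)).toReal = min 1 (r1 / p))
    (hER2 : ∀ p : ℝ, 0 < p → (μ2 (Set.Ici p)).toReal = min 1 (r2 / p)) :
    (∀ a b c : ℝ, 0 ≤ a → a ≤ b → b ≤ c →
      rev (μ1.prod μ2) a b c ≤ rev (μ1.prod μ2) c b c) ∧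
    sSup {r : ℝ | ∃ a b c : ℝ, 0 ≤ a ∧ 0 ≤ b ∧ max a b ≤ c ∧ r = rev (μ1.prod μ2) a b c} =
      sSup {r : ℝ | ∃ p : ℝ, 0 ≤ p ∧ r = rev (μ1.prod μ2) p p p} := by
  have hμ1 := monotoneOn_mul_measureReal_Ici hER1
  have hμ2 := monotoneOn_mul_measureReal_Ici hER2
  have hpos1 := ae_nonneg_of_measureReal_Ici hr1 hER1
  have hpos2 := ae_nonneg_of_measureReal_Ici hr2 hER2
  refine ⟨fun a b c ha hab hbc => rev_le_rev_of_le hμ1 hpos2 ha hab hbc, ?_⟩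
  refine csSup_eq_csSup_of_forall_exists_le ?_ ?_
  · rintro _ ⟨a, b, c, ha, hb, hc, rfl⟩
    exact ⟨_, ⟨c, ha.trans ((le_max_left a b).trans hc), rfl⟩,
      rev_le_rev_bundle hμ1 hμ2 hpos1 hpos2 ha hb hc⟩
  · rintro _ ⟨p, hp, rfl⟩
    exact ⟨_, ⟨p, p, p, hp, hp, (max_self p).le, rfl⟩, le_rfl⟩
end

section
/- For two i.i.d. items with values from F × F, and any deterministic menu (a,b,c) with a < b ≤ c ≤ a+b and c > 2a: if 2a · Pr[a ≤ v < c−a] ≤ (c−2a) · Pr[v ≥ c−a] (where v ~ F), then Rev(b,b,c) + Rev(c−a, c−a, 2c−2a) ≥ 2·Rev(a,b,c); so one of the symmetric menus (b,b,c), (c−a,c−a,2c−2a) has revenue at least Rev(a,b,c). -/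
open MeasureTheory

noncomputable def payE (a b c : ℝ) (v : ℝ × ℝ) : ℝ :=
  if 0 ≤ v.1 + v.2 - c ∧ v.1 - a ≤ v.1 + v.2 - c ∧ v.2 - b ≤ v.1 + v.2 - c then c
  else if 0 ≤ v.2 - b ∧ v.1 - a ≤ v.2 - b then b
  else if 0 ≤ v.1 - a then a else 0

noncomputable def psi (a c v : ℝ) : ℝ :=
  (Set.Ico a (c - a)).indicator (fun _ => a) v +
  (Set.Ici (c - a)).indicator (fun _ => (2 * a - c) / 2) v

lemma payE_meas (a b c : ℝ) : Measurable (payE a b c) := by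
  have m1 : Measurable fun v : ℝ × ℝ => v.1 + v.2 - c := by fun_prop
  have m2 : Measurable fun v : ℝ × ℝ => v.1 - a := by fun_prop
  have m3 : Measurable fun v : ℝ × ℝ => v.2 - b := by fun_prop
  have m0 : Measurable fun _ : ℝ × ℝ => (0 : ℝ) := measurable_const
  unfold payE
  refine Measurable.ite ?_ measurable_const
    (Measurable.ite ?_ measurable_const (Measurable.ite ?_ measurable_const measurable_const))
  · exact MeasurableSet.inter (measurableSet_le m0 m1)
      (MeasurableSet.inter (measurableSet_le m2 m1) (measurableSet_le m3 m1))
  · exact MeasurableSet.inter (measurableSet_le m0 m3) (measurableSet_le m2 m3)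
  · exact measurableSet_le m0 m2

lemma payE_nonneg' {a b c : ℝ} (ha : 0 ≤ a) (hb : 0 ≤ b) (hc : 0 ≤ c) (v : ℝ × ℝ) :
    0 ≤ payE a b c v := by
  simp only [payE]; split_ifs <;> first | exact le_rfl | assumption

lemma payE_le {a b c : ℝ} (h1 : a ≤ c) (h2 : b ≤ c) (h3 : 0 ≤ c) (v : ℝ × ℝ) :
    payE a b c v ≤ c := by
  simp only [payE]; split_ifs <;> first | exact le_rfl | assumption

lemma psi_meas (a c : ℝ) : Measurable (psi a c) :=
  (measurable_const.indicator measurableSet_Ico).add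
    (measurable_const.indicator measurableSet_Ici)

lemma psi_abs_le {a c : ℝ} (ha : 0 ≤ a) (hac : a ≤ c) (v : ℝ) : |psi a c v| ≤ c := by
  unfold psi
  rcases le_or_gt (c - a) v with h | h
  · rw [Set.indicator_of_notMem (by simp [Set.mem_Ico]; intro; linarith),
      Set.indicator_of_mem (by simpa [Set.mem_Ici] using h)]
    rw [zero_add, abs_le]; constructor <;> linarith
  · rcases le_or_gt a v with h' | h'
    · rw [Set.indicator_of_mem (by simp [Set.mem_Ico]; exact ⟨h', h⟩),
        Set.indicator_of_notMem (by simp [Set.mem_Ici]; linarith)]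
      rw [add_zero, abs_of_nonneg ha]; linarith
    · rw [Set.indicator_of_notMem (by simp [Set.mem_Ico]; intro; linarith),
        Set.indicator_of_notMem (by simp [Set.mem_Ici]; linarith)]
      simp; linarith

lemma pay_eq {a b c : ℝ} (ha : 0 ≤ a) (hab : a ≤ b) (hbc : b ≤ c) (v1 v2 : ℝ) :
    pay a b c v1 v2 = payE a b c (v1, v2) := by
  simp only [pay, payE]
  by_cases h1 : 0 ≤ v1 + v2 - c ∧ v1 - a ≤ v1 + v2 - c ∧ v2 - b ≤ v1 + v2 - c
  · rw [if_pos h1]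
    have hm : max (max 0 (v1 - a)) (max (v2 - b) (v1 + v2 - c)) = v1 + v2 - c :=
      le_antisymm (max_le (max_le h1.1 h1.2.1) (max_le h1.2.2 le_rfl))
        (le_max_of_le_right (le_max_right _ _))
    rw [hm, if_pos rfl,
      max_eq_right (show (if v2 - b = v1 + v2 - c then b else 0) ≤ c by
        split_ifs <;> linarith),
      max_eq_right (show (if v1 - a = v1 + v2 - c then a else 0) ≤ c by
        split_ifs <;> linarith)]
  · rw [if_neg h1]
    by_cases h2 : 0 ≤ v2 - b ∧ v1 - a ≤ v2 - b
    · rw [if_pos h2]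
      have h12 : v1 + v2 - c < v2 - b := by
        rcases not_and_or.mp h1 with h | h
        · push_neg at h; linarith [h2.1]
        rcases not_and_or.mp h with h | h <;> push_neg at h
        · linarith [h2.2]
        · linarith
      have hm : max (max 0 (v1 - a)) (max (v2 - b) (v1 + v2 - c)) = v2 - b :=
        le_antisymm (max_le (max_le h2.1 h2.2) (max_le le_rfl h12.le))
          (le_max_of_le_right (le_max_left _ _))
      rw [hm, if_pos rfl, if_neg (show ¬(v1 + v2 - c = v2 - b) by intro h; linarith),
        max_eq_left (show (0:ℝ) ≤ b by linarith),
        max_eq_right (show (if v1 - a = v2 - b then a else 0) ≤ b by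
          split_ifs <;> linarith)]
    · rw [if_neg h2]
      by_cases h3 : 0 ≤ v1 - a
      · rw [if_pos h3]
        have h21 : v2 - b < v1 - a := by
          rcases not_and_or.mp h2 with h | h <;> push_neg at h <;> linarith
        have h121 : v1 + v2 - c < v1 - a := by
          rcases not_and_or.mp h1 with h | h
          · push_neg at h; linarith
          rcases not_and_or.mp h with h | h <;> push_neg at h <;> linarith
        have hm : max (max 0 (v1 - a)) (max (v2 - b) (v1 + v2 - c)) = v1 - a :=
          le_antisymm (max_le (max_le h3 le_rfl) (max_le h21.le h121.le))
            (le_max_of_le_left (le_max_right _ _))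
        rw [hm, if_pos rfl, if_neg (show ¬(v2 - b = v1 - a) by intro h; linarith),
          if_neg (show ¬(v1 + v2 - c = v1 - a) by intro h; linarith), max_self,
          max_eq_left ha]
      · rw [if_neg h3]
        push_neg at h3
        have h21 : v2 - b < 0 := by
          rcases not_and_or.mp h2 with h | h <;> push_neg at h <;> linarith
        have h121 : v1 + v2 - c < 0 := by
          rcases not_and_or.mp h1 with h | h
          · push_neg at h; linarith
          rcases not_and_or.mp h with h | h <;> push_neg at h <;> linarith
        have hm : max (max 0 (v1 - a)) (max (v2 - b) (v1 + v2 - c)) = 0 := by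
          rw [max_eq_left h3.le, max_eq_left (max_le h21.le h121.le)]
        rw [hm, if_neg (show ¬(v1 - a = 0) by intro h; linarith),
          if_neg (show ¬(v2 - b = 0) by intro h; linarith),
          if_neg (show ¬(v1 + v2 - c = 0) by intro h; linarith)]
        simp

lemma payE_eq_c {a b c x y : ℝ} (h1 : c ≤ x + y) (h2 : c - a ≤ y) (h3 : c - b ≤ x) :
    payE a b c (x, y) = c := by
  simp only [payE]; rw [if_pos ⟨by linarith, by linarith, by linarith⟩]

lemma payE_eq_b {a b c x y : ℝ} (h1 : b ≤ y) (h2 : x - a ≤ y - b) (h3 : x + y - c < y - b) :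
    payE a b c (x, y) = b := by
  simp only [payE]
  rw [if_neg (by rintro ⟨-, -, h⟩; linarith), if_pos ⟨by linarith, h2⟩]

lemma payE_eq_a {a b c x y : ℝ} (h1 : a ≤ x) (h2 : y - b < x - a) (h3 : y < c - a) :
    payE a b c (x, y) = a := by
  simp only [payE]
  rw [if_neg (by rintro ⟨-, h, -⟩; linarith),
    if_neg (by rintro ⟨h, h'⟩; linarith), if_pos (by linarith)]

lemma payE_eq_0 {a b c x y : ℝ} (h1 : x < a) (h2 : y < b) (h3 : x + y < c) :
    payE a b c (x, y) = 0 := by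
  simp only [payE]
  rw [if_neg (by rintro ⟨h, -, -⟩; linarith),
    if_neg (by rintro ⟨h, -⟩; linarith), if_neg (by linarith)]

lemma payE_nonneg {a b c : ℝ} (ha : 0 ≤ a) (hb : 0 ≤ b) (hc : 0 ≤ c) (v : ℝ × ℝ) :
    0 ≤ payE a b c v := by
  simp only [payE]; split_ifs <;> first | exact le_rfl | assumption

lemma psi_lo {a c v : ℝ} (h1 : v < a) (h2 : v < c - a) : psi a c v = 0 := by
  unfold psi
  rw [Set.indicator_of_notMem (by simp only [Set.mem_Ico, not_and]; intro h; linarith),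
    Set.indicator_of_notMem (by simp only [Set.mem_Ici, not_le]; linarith)]
  ring

lemma psi_mid {a c v : ℝ} (h1 : a ≤ v) (h2 : v < c - a) : psi a c v = a := by
  unfold psi
  rw [Set.indicator_of_mem (by simp only [Set.mem_Ico]; exact ⟨h1, h2⟩),
    Set.indicator_of_notMem (by simp only [Set.mem_Ici, not_le]; linarith)]
  ring

lemma psi_hi {a c v : ℝ} (h : c - a ≤ v) : psi a c v = (2 * a - c) / 2 := by
  unfold psi
  rw [Set.indicator_of_notMem (by simp only [Set.mem_Ico, not_and, not_lt]; intro h'; linarith),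
    Set.indicator_of_mem (by simpa [Set.mem_Ici] using h)]
  ring

lemma psi_nonneg {a c v : ℝ} (ha : 0 ≤ a) (h : v < c - a) : 0 ≤ psi a c v := by
  rcases le_or_gt a v with h' | h'
  · rw [psi_mid h' h]; exact ha
  · rw [psi_lo h' h]

lemma key {a b c : ℝ} (ha : 0 ≤ a) (hab : a < b) (hbc : b ≤ c) (hsub : c ≤ a + b)
    (h2a : 2 * a < c) (v1 v2 : ℝ) :
    payE a b c (v1, v2) + payE a b c (v2, v1) ≤
      payE b b c (v1, v2) + payE (c - a) (c - a) (2 * c - 2 * a) (v1, v2) +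
      psi a c v1 + psi a c v2 := by
  rcases le_or_gt (c - a) v1 with hv1 | hv1 <;> rcases le_or_gt (c - a) v2 with hv2 | hv2
  · -- A: both high
    rw [payE_eq_c (a := a) (b := b) (c := c) (x := v1) (y := v2) (by linarith) (by linarith)
        (by linarith),
      payE_eq_c (a := a) (b := b) (c := c) (x := v2) (y := v1) (by linarith) (by linarith)
        (by linarith),
      payE_eq_c (a := b) (b := b) (c := c) (x := v1) (y := v2) (by linarith) (by linarith)
        (by linarith),
      payE_eq_c (a := c - a) (b := c - a) (c := 2 * c - 2 * a) (x := v1) (y := v2)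
        (by linarith) (by linarith) (by linarith),
      psi_hi hv1, psi_hi hv2]
    linarith
  · -- C: v1 high, v2 low
    rw [payE_eq_a (a := a) (b := b) (c := c) (x := v1) (y := v2) (by linarith) (by linarith)
        (by linarith),
      payE_eq_a (a := c - a) (b := c - a) (c := 2 * c - 2 * a) (x := v1) (y := v2)
        (by linarith) (by linarith) (by linarith),
      psi_hi hv1]
    rcases le_or_gt c (v1 + v2) with hs | hs
    · rcases le_or_gt (c - b) v2 with hcb | hcb
      · rw [payE_eq_c (a := a) (b := b) (c := c) (x := v2) (y := v1) (by linarith) (by linarith)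
            (by linarith),
          payE_eq_c (a := b) (b := b) (c := c) (x := v1) (y := v2) (by linarith) (by linarith)
            (by linarith)]
        have := psi_nonneg (a := a) (c := c) (v := v2) ha (by linarith)
        linarith
      · have hv1b : b < v1 := by linarith
        rw [payE_eq_b (a := a) (b := b) (c := c) (x := v2) (y := v1) (by linarith) (by linarith)
            (by linarith),
          payE_eq_a (a := b) (b := b) (c := c) (x := v1) (y := v2) (by linarith) (by linarith)
            (by linarith),
          psi_lo (v := v2) (by linarith) (by linarith)]
        linarith
    · have hv2a : v2 < a := by linarith
      rw [psi_lo (v := v2) (by linarith) (by linarith)]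
      rcases le_or_gt b v1 with hb1 | hb1
      · rw [payE_eq_b (a := a) (b := b) (c := c) (x := v2) (y := v1) (by linarith) (by linarith)
            (by linarith),
          payE_eq_a (a := b) (b := b) (c := c) (x := v1) (y := v2) (by linarith) (by linarith)
            (by linarith)]
        linarith
      · rw [payE_eq_0 (a := a) (b := b) (c := c) (x := v2) (y := v1) (by linarith) (by linarith)
            (by linarith),
          payE_eq_0 (a := b) (b := b) (c := c) (x := v1) (y := v2) (by linarith) (by linarith)
            (by linarith)]
        linarith
  · -- B: v1 low, v2 high
    rw [payE_eq_a (a := a) (b := b) (c := c) (x := v2) (y := v1) (by linarith) (by linarith)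
        (by linarith),
      payE_eq_b (a := c - a) (b := c - a) (c := 2 * c - 2 * a) (x := v1) (y := v2)
        (by linarith) (by linarith) (by linarith),
      psi_hi hv2]
    rcases le_or_gt c (v1 + v2) with hs | hs
    · rcases le_or_gt (c - b) v1 with hcb | hcb
      · rw [payE_eq_c (a := a) (b := b) (c := c) (x := v1) (y := v2) (by linarith) (by linarith)
            (by linarith),
          payE_eq_c (a := b) (b := b) (c := c) (x := v1) (y := v2) (by linarith) (by linarith)
            (by linarith)]
        have := psi_nonneg (a := a) (c := c) (v := v1) ha (by linarith)
        linarith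
      · have hv2b : b < v2 := by linarith
        rw [payE_eq_b (a := a) (b := b) (c := c) (x := v1) (y := v2) (by linarith) (by linarith)
            (by linarith),
          payE_eq_b (a := b) (b := b) (c := c) (x := v1) (y := v2) (by linarith) (by linarith)
            (by linarith),
          psi_lo (v := v1) (by linarith) (by linarith)]
        linarith
    · have hv1a : v1 < a := by linarith
      rw [psi_lo (v := v1) (by linarith) (by linarith)]
      rcases le_or_gt b v2 with hb2 | hb2
      · rw [payE_eq_b (a := a) (b := b) (c := c) (x := v1) (y := v2) (by linarith) (by linarith)
            (by linarith),
          payE_eq_b (a := b) (b := b) (c := c) (x := v1) (y := v2) (by linarith) (by linarith)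
            (by linarith)]
        linarith
      · rw [payE_eq_0 (a := a) (b := b) (c := c) (x := v1) (y := v2) (by linarith) (by linarith)
            (by linarith),
          payE_eq_0 (a := b) (b := b) (c := c) (x := v1) (y := v2) (by linarith) (by linarith)
            (by linarith)]
        linarith
  · -- D: both low
    rw [payE_eq_0 (a := c - a) (b := c - a) (c := 2 * c - 2 * a) (x := v1) (y := v2)
        (by linarith) (by linarith) (by linarith)]
    have hQ := payE_nonneg (a := b) (b := b) (c := c) (by linarith) (by linarith)
      (by linarith) (v1, v2)
    have e1 : payE a b c (v1, v2) = psi a c v1 := by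
      rcases le_or_gt a v1 with h | h
      · rw [payE_eq_a (a := a) (b := b) (c := c) (x := v1) (y := v2) (by linarith) (by linarith)
            (by linarith), psi_mid h hv1]
      · rw [payE_eq_0 (a := a) (b := b) (c := c) (x := v1) (y := v2) (by linarith) (by linarith)
            (by linarith), psi_lo h hv1]
    have e2 : payE a b c (v2, v1) = psi a c v2 := by
      rcases le_or_gt a v2 with h | h
      · rw [payE_eq_a (a := a) (b := b) (c := c) (x := v2) (y := v1) (by linarith) (by linarith)
            (by linarith), psi_mid h hv2]
      · rw [payE_eq_0 (a := a) (b := b) (c := c) (x := v2) (y := v1) (by linarith) (by linarith)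
            (by linarith), psi_lo h hv2]
    linarith

theorem stmt11 (μ : Measure ℝ) [IsProbabilityMeasure μ] (hsupp : μ (Set.Iio 0) = 0)
    (a b c : ℝ) (ha : 0 ≤ a) (hab : a < b) (hbc : b ≤ c) (hsub : c ≤ a + b)
    (h2a : 2 * a < c)
    (hcond : 2 * a * (μ (Set.Ico a (c - a))).toReal ≤
      (c - 2 * a) * (μ (Set.Ici (c - a))).toReal) :
    2 * rev (μ.prod μ) a b c ≤
      rev (μ.prod μ) b b c + rev (μ.prod μ) (c - a) (c - a) (2 * c - 2 * a) ∧
    (rev (μ.prod μ) a b c ≤ rev (μ.prod μ) b b c ∨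
      rev (μ.prod μ) a b c ≤ rev (μ.prod μ) (c - a) (c - a) (2 * c - 2 * a)) := by
  have hb0 : (0:ℝ) ≤ b := ha.trans hab.le
  have hc0 : (0:ℝ) ≤ c := hb0.trans hbc
  have ha'0 : (0:ℝ) ≤ c - a := by linarith
  have hrw : ∀ (a' b' c' : ℝ), 0 ≤ a' → a' ≤ b' → b' ≤ c' →
      rev (μ.prod μ) a' b' c' = ∫ v, payE a' b' c' v ∂(μ.prod μ) := by
    intro a' b' c' h1 h2 h3
    unfold rev
    congr 1; funext v
    rw [pay_eq h1 h2 h3]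
  have hint : ∀ (a' b' c' : ℝ), 0 ≤ a' → a' ≤ b' → b' ≤ c' →
      Integrable (payE a' b' c') (μ.prod μ) := by
    intro a' b' c' h1 h2 h3
    refine (integrable_const c').mono' (payE_meas a' b' c').aestronglyMeasurable
      (ae_of_all _ fun v => ?_)
    rw [Real.norm_eq_abs,
      abs_of_nonneg (payE_nonneg' h1 (h1.trans h2) ((h1.trans h2).trans h3) v)]
    exact payE_le (h2.trans h3) h3 ((h1.trans h2).trans h3) v
  have hI1 := hint a b c ha hab.le hbc
  have hIQ := hint b b c hb0 le_rfl hbc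
  have hIR := hint (c - a) (c - a) (2 * c - 2 * a) ha'0 le_rfl (by linarith)
  have hI1s : Integrable (fun v : ℝ × ℝ => payE a b c v.swap) (μ.prod μ) := by
    refine (integrable_const c).mono'
      ((payE_meas a b c).comp measurable_swap).aestronglyMeasurable (ae_of_all _ fun v => ?_)
    rw [Real.norm_eq_abs, abs_of_nonneg (payE_nonneg' ha hb0 hc0 v.swap)]
    exact payE_le (a := a) (hab.le.trans hbc) hbc hc0 v.swap
  have hIpsi1 : Integrable (fun v : ℝ × ℝ => psi a c v.1) (μ.prod μ) := by
    refine (integrable_const c).mono'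
      ((psi_meas a c).comp measurable_fst).aestronglyMeasurable (ae_of_all _ fun v => ?_)
    rw [Real.norm_eq_abs]
    exact psi_abs_le ha (by linarith) _
  have hIpsi2 : Integrable (fun v : ℝ × ℝ => psi a c v.2) (μ.prod μ) := by
    refine (integrable_const c).mono'
      ((psi_meas a c).comp measurable_snd).aestronglyMeasurable (ae_of_all _ fun v => ?_)
    rw [Real.norm_eq_abs]
    exact psi_abs_le ha (by linarith) _
  have hmono : ∫ v, (payE a b c v + payE a b c v.swap) ∂(μ.prod μ) ≤
      ∫ v, (payE b b c v + payE (c - a) (c - a) (2 * c - 2 * a) v +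
        psi a c v.1 + psi a c v.2) ∂(μ.prod μ) := by
    refine integral_mono (hI1.add hI1s) (((hIQ.add hIR).add hIpsi1).add hIpsi2) fun v => ?_
    exact key ha hab hbc hsub h2a v.1 v.2
  have hIsum1 : Integrable (fun v : ℝ × ℝ =>
      payE b b c v + payE (c - a) (c - a) (2 * c - 2 * a) v) (μ.prod μ) := hIQ.add hIR
  have hIsum2 : Integrable (fun v : ℝ × ℝ =>
      payE b b c v + payE (c - a) (c - a) (2 * c - 2 * a) v + psi a c v.1) (μ.prod μ) :=
    hIsum1.add hIpsi1
  rw [integral_add hI1 hI1s, integral_add hIsum2 hIpsi2, integral_add hIsum1 hIpsi1,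
    integral_add hIQ hIR] at hmono
  have hswap : ∫ v : ℝ × ℝ, payE a b c v.swap ∂(μ.prod μ) =
      ∫ v, payE a b c v ∂(μ.prod μ) := integral_prod_swap (payE a b c)
  have hfst : ∫ v : ℝ × ℝ, psi a c v.1 ∂(μ.prod μ) = ∫ x, psi a c x ∂μ := by
    rw [← integral_map measurable_fst.aemeasurable (psi_meas a c).aestronglyMeasurable,
      Measure.map_fst_prod, measure_univ, one_smul]
  have hsnd : ∫ v : ℝ × ℝ, psi a c v.2 ∂(μ.prod μ) = ∫ x, psi a c x ∂μ := by
    rw [← integral_map measurable_snd.aemeasurable (psi_meas a c).aestronglyMeasurable,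
      Measure.map_snd_prod, measure_univ, one_smul]
  have hpsiint : ∫ x, psi a c x ∂μ =
      a * (μ (Set.Ico a (c - a))).toReal + (2 * a - c) / 2 * (μ (Set.Ici (c - a))).toReal := by
    unfold psi
    rw [integral_add ((integrable_const a).indicator measurableSet_Ico)
      ((integrable_const ((2 * a - c) / 2)).indicator measurableSet_Ici),
      integral_indicator_const a measurableSet_Ico,
      integral_indicator_const ((2 * a - c) / 2) measurableSet_Ici]
    simp [smul_eq_mul, Measure.real]; ring
  have hpsile : ∫ x, psi a c x ∂μ ≤ 0 := by rw [hpsiint]; linarith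
  have hmain : 2 * rev (μ.prod μ) a b c ≤
      rev (μ.prod μ) b b c + rev (μ.prod μ) (c - a) (c - a) (2 * c - 2 * a) := by
    rw [hrw a b c ha hab.le hbc, hrw b b c hb0 le_rfl hbc,
      hrw (c - a) (c - a) (2 * c - 2 * a) ha'0 le_rfl (by linarith)]
    rw [hswap, hfst, hsnd] at hmono
    linarith
  refine ⟨hmain, ?_⟩
  by_contra h
  push_neg at h
  obtain ⟨h1, h2⟩ := h
  linarith
end
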